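/- arXiv:2207.04704 — 2 statements merged into one kernel-verified Lean document; each statement's English description precedes it below -/
import Mathlib

section
/- Let R be a commutative ring, N an associative (non-unital) R-algebra, s ∈ N, and φ_L, φ_R : N → N R-linear maps satisfying: (i) φ_L(s) = φ_R(s), (ii) φ_L²(b) = s·b and φ_R²(b) = b·s for all b, (iii) φ_L(b·b') = φ_L(b)·b' and φ_R(b·b') = b·φ_R(b') for all b, b', and (iv) φ_R(b)·b' = b·φ_L(b') and φ_L(φ_R(b)) = φ_R(φ_L(b)) for all b, b'. Then the R-module R ⊕ N with multiplication (λ, b)·(λ', b') = (0, λλ'·s + λ·φ_L(b') + λ'·φ_R(b) + b·b') is an associative R-algebra (i.e., the multiplication is R-bilinear and associative). -/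
/-- the cyclic extension `R ⊕ N` of a non-unital associative `R`-algebra
`N` with multiplication `(λ, b)·(λ', b') = (0, λλ'·s + λ·φ_L(b') + λ'·φ_R(b) + b·b')`
is an associative `R`-algebra, i.e. the multiplication is `R`-bilinear and associative. -/
theorem stmt2 (R : Type*) [CommRing R] (N : Type*) [NonUnitalRing N]
    [Module R N] [SMulCommClass R N N] [IsScalarTower R N N]
    (s : N) (φL φR : N →ₗ[R] N)
    (h1 : φL s = φR s)
    (h2L : ∀ b, φL (φL b) = s * b) (h2R : ∀ b, φR (φR b) = b * s)
    (h3L : ∀ b b', φL (b * b') = φL b * b') (h3R : ∀ b b', φR (b * b') = b * φR b')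
    (h4 : ∀ b b', φR b * b' = b * φL b') (h5 : ∀ b, φL (φR b) = φR (φL b))
    (mul : R × N → R × N → R × N)
    (hmul : ∀ p q, mul p q =
      (0, (p.1 * q.1) • s + p.1 • φL q.2 + q.1 • φR p.2 + p.2 * q.2)) :
    (∀ a b c, mul (mul a b) c = mul a (mul b c)) ∧
    (∀ a b c, mul (a + b) c = mul a c + mul b c) ∧
    (∀ a b c, mul a (b + c) = mul a b + mul a c) ∧
    (∀ (r : R) (a b), mul (r • a) b = r • mul a b) ∧
    (∀ (r : R) (a b), mul a (r • b) = r • mul a b) := by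
  refine ⟨?_, ?_, ?_, ?_, ?_⟩ <;> intros a b c <;>
    simp only [hmul, Prod.mk_add_mk, Prod.smul_mk, Prod.fst_add, Prod.snd_add,
      Prod.smul_fst, Prod.smul_snd, map_add, map_smul, map_mul, smul_add,
      smul_eq_mul, add_mul, mul_add, smul_mul_assoc, mul_smul_comm,
      h2L, h2R, h3L, h3R, h5, smul_zero, mul_zero, zero_mul, map_zero,
      zero_smul, smul_smul, zero_add, add_zero, Prod.mk.injEq] <;>
    refine ⟨trivial, ?_⟩
  · rw [h1, h4 a.2 c.2, mul_assoc]
    module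
  all_goals module
end

section
/- Every polycyclic group is Hopfian; that is, every surjective group homomorphism from a polycyclic group to itself is injective. -/
/-- A group is polycyclic if it has a finite subnormal series with cyclic quotients. -/
def IsPolycyclic (G : Type*) [Group G] : Prop :=
  ∃ (n : ℕ) (s : Fin (n + 1) → Subgroup G),
    s 0 = ⊤ ∧ s (Fin.last n) = ⊥ ∧
    ∀ i : Fin n, s i.succ ≤ s i.castSucc ∧
      ((s i.succ).subgroupOf (s i.castSucc)).Normal ∧
      ∃ g ∈ s i.castSucc, s i.castSucc = Subgroup.closure (insert g (s i.succ : Set G))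

/-!
In a polycyclic group every subgroup is finitely generated: if `N ⊴ K` with `K / N` cyclic, a
subgroup `H ≤ K` is generated by lifts of generators of its (cyclic) image in `K / N` together
with generators of `H ⊓ N`, and one inducts down the subnormal series.

In such a group the kernels of the iterates of a surjective endomorphism `f` form an ascending
chain whose union is finitely generated, so the chain stops at some `ker f^n`. If `f x = 1`,
write `x = f^n y`; then `y ∈ ker f^(n+1) = ker f^n`, so `x = 1`.
-/

open Subgroup

namespace Subgroup

variable {G G' : Type*} [Group G] [Group G']

theorem FG.exists_le_of_le_iSup {ι : Type*} [Nonempty ι] {K : ι → Subgroup G}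
    (hK : Directed (· ≤ ·) K) {H : Subgroup G} (hH : H.FG) (hle : H ≤ ⨆ i, K i) :
    ∃ i, H ≤ K i := by
  classical
  obtain ⟨S, rfl⟩ := hH
  choose! j hj using fun s (hs : s ∈ S) => (mem_iSup_of_directed hK).mp (hle (subset_closure hs))
  obtain ⟨z, hz⟩ := hK.finset_le (S.image j)
  exact ⟨z, (closure_le _).mpr fun s hs => hz _ (Finset.mem_image_of_mem j hs) (hj s hs)⟩

theorem FG.map {H : Subgroup G} (hH : H.FG) (φ : G →* G') : (H.map φ).FG := by
  classical
  obtain ⟨S, rfl⟩ := hH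
  exact ⟨S.image φ, by rw [Finset.coe_image, MonoidHom.map_closure]⟩

theorem FG.of_fg_map_of_fg_inf_ker {φ : G →* G'} {H : Subgroup G} (hmap : (H.map φ).FG)
    (hker : (H ⊓ φ.ker).FG) : H.FG := by
  classical
  obtain ⟨S', hS'⟩ := hmap
  obtain ⟨S, hS⟩ := hker
  choose! lift hlift_mem hlift_eq using
    fun y (hy : y ∈ S') => mem_map.mp (hS' ▸ subset_closure hy)
  set L := closure (S'.image lift : Set G)
  have hLH : L ≤ H := (closure_le _).mpr <| by simpa [Set.subset_def] using hlift_mem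
  have hLmap : L.map φ = H.map φ := by
    rw [MonoidHom.map_closure, Finset.coe_image, Set.image_image, ← hS']
    exact congrArg closure (Set.EqOn.image_eq_self hlift_eq)
  refine ⟨S'.image lift ∪ S, le_antisymm ?_ fun x hx => ?_⟩
  · rw [Finset.coe_union, closure_union, hS]
    exact sup_le hLH inf_le_left
  · obtain ⟨y, hyL, hyx⟩ := mem_map.mp (hLmap ▸ mem_map_of_mem φ hx)
    have hker : y⁻¹ * x ∈ closure (S : Set G) := by
      rw [hS]
      exact ⟨H.mul_mem (H.inv_mem (hLH hyL)) hx, by simp [hyx]⟩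
    rw [Finset.coe_union, closure_union, ← mul_inv_cancel_left y x]
    exact mul_mem (mem_sup_left hyL) (mem_sup_right hker)

end Subgroup

def Group.IsNoetherian (G : Type*) [Group G] : Prop :=
  ∀ H : Subgroup G, H.FG

namespace Group.IsNoetherian

variable {G G' : Type*} [Group G] [Group G']

theorem of_injective (hG' : IsNoetherian G') (φ : G →* G') (hφ : Function.Injective φ) :
    IsNoetherian G := fun H =>
  FG.of_fg_map_of_fg_inf_ker (hG' _) <| by
    rw [(MonoidHom.ker_eq_bot_iff φ).mpr hφ, inf_bot_eq]
    exact FG.bot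

theorem of_isCyclic [IsCyclic G] : IsNoetherian G := fun H => by
  obtain ⟨g, rfl⟩ := (H.isCyclic_iff_exists_zpowers_eq_top).mp inferInstance
  exact ⟨{g}, by rw [Finset.coe_singleton, zpowers_eq_closure]⟩

theorem of_quotient (N : Subgroup G) [N.Normal] (hN : IsNoetherian N)
    (hQ : IsNoetherian (G ⧸ N)) : IsNoetherian G := fun H =>
  FG.of_fg_map_of_fg_inf_ker (φ := QuotientGroup.mk' N) (hQ _) <| by
    rw [QuotientGroup.ker_mk', ← subgroupOf_map_subtype]
    exact (hN _).map N.subtype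

theorem injective_of_surjective (hG : IsNoetherian G) {f : G →* G}
    (hf : Function.Surjective f) : Function.Injective f := by
  let F : Monoid.End G := f
  let K : ℕ → Subgroup G := fun n => MonoidHom.ker (F ^ n)
  have hmem : ∀ n x, x ∈ K n ↔ f^[n] x = 1 := fun _ _ => Iff.rfl
  have hK : Monotone K := monotone_nat_of_le_succ fun n x hx => by
    rw [hmem, Function.iterate_succ_apply', (hmem n x).mp hx, map_one]
  obtain ⟨n, hn⟩ := (hG _).exists_le_of_le_iSup hK.directed_le le_rfl
  rw [← MonoidHom.ker_eq_bot_iff, eq_bot_iff]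
  intro x hx
  obtain ⟨y, rfl⟩ := hf.iterate n x
  have hy : y ∈ K (n + 1) := by rwa [hmem, Function.iterate_succ_apply']
  exact (hmem n y).mp (hn (le_iSup K (n + 1) hy))

end Group.IsNoetherian

theorem isCyclic_quotient_subgroupOf {G : Type*} [Group G] {K N : Subgroup G} {g : G}
    (hg : g ∈ K) (hNK : N ≤ K) [(N.subgroupOf K).Normal]
    (hK : K = closure (insert g (N : Set G))) : IsCyclic (K ⧸ N.subgroupOf K) := by
  set g' : K ⧸ N.subgroupOf K := QuotientGroup.mk ⟨g, hg⟩
  refine isCyclic_iff_exists_zpowers_eq_top.mpr ⟨g', (eq_top_iff' _).mpr fun q => ?_⟩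
  induction q using QuotientGroup.induction_on with | H k => ?_
  let P := (zpowers g').comap (QuotientGroup.mk' _)
  have hN_P : ∀ n (hn : n ∈ N), (⟨n, hNK hn⟩ : K) ∈ P := fun n hn => by
    rw [mem_comap, QuotientGroup.mk'_apply,
      (QuotientGroup.eq_one_iff (N := N.subgroupOf K) ⟨n, hNK hn⟩).mpr hn]
    exact one_mem _
  have hKP : K ≤ P.map K.subtype := hK.le.trans <| (closure_le _).mpr <|
    Set.insert_subset ⟨⟨g, hg⟩, mem_zpowers _, rfl⟩ fun n hn => ⟨_, hN_P n hn, rfl⟩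
  obtain ⟨k', hk'P, hk'k⟩ := hKP k.2
  rwa [← Subtype.ext hk'k]

theorem IsPolycyclic.isNoetherian {G : Type*} [Group G] (h : IsPolycyclic G) :
    Group.IsNoetherian G := by
  obtain ⟨n, s, h0, hlast, hstep⟩ := h
  have hseries : ∀ i, Group.IsNoetherian (s i) := by
    intro i
    induction i using Fin.reverseInduction with
    | last =>
      rw [hlast]
      exact .of_isCyclic
    | cast i ih =>
      obtain ⟨hle, hnorm, g, hg, hK⟩ := hstep i
      have := isCyclic_quotient_subgroupOf hg hle hK
      exact .of_quotient _
        (ih.of_injective (subgroupOfEquivOfLe hle).toMonoidHom (MulEquiv.injective _)) .of_isCyclic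
  exact (h0 ▸ hseries 0).of_injective topEquiv.symm.toMonoidHom (MulEquiv.injective _)

/-- every polycyclic group is Hopfian: every surjective endomorphism
is injective. -/
theorem stmt5 (G : Type*) [Group G] (h : IsPolycyclic G) (f : G →* G)
    (hf : Function.Surjective f) : Function.Injective f :=
  h.isNoetherian.injective_of_surjective hf
end
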